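/- arXiv:1204.2318 — 5 statements merged into one kernel-verified Lean document; each statement's English description precedes it below -/
import Mathlib

section
/- For all natural numbers k₁, k₂ and every positive integer n, with k = k₁ + k₂, one has (k! / (k₁! · k₂!)) · (k₁+n)^(k₁+n) · k₂^(k₂) ≤ (k+n)^(k+n), where we interpret 0^0 = 1. -/
/-- For all naturals `k₁, k₂` and positive `n`, with `k = k₁ + k₂`,
`(k! / (k₁! k₂!)) (k₁+n)^(k₁+n) k₂^k₂ ≤ (k+n)^(k+n)` (with `0^0 = 1`). -/
theorem multinomial_weight_bound (k₁ k₂ n : ℕ) (hn : 0 < n) :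
    Nat.choose (k₁ + k₂) k₁ * (k₁ + n) ^ (k₁ + n) * k₂ ^ k₂
      ≤ (k₁ + k₂ + n) ^ (k₁ + k₂ + n) := by
  have hrw : k₁ + k₂ + n = (k₁ + n) + k₂ := by ring
  have hexp : ((k₁ + n) + k₂) ^ ((k₁ + n) + k₂)
      = ∑ i ∈ Finset.range ((k₁ + n + k₂) + 1),
        (k₁ + n) ^ i * k₂ ^ (k₁ + n + k₂ - i) * (k₁ + n + k₂).choose i := add_pow _ _ _
  have hmem : k₁ + n ∈ Finset.range ((k₁ + n + k₂) + 1) := by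
    simp only [Finset.mem_range]; omega
  have hsum := Finset.single_le_sum
    (f := fun i => (k₁ + n) ^ i * k₂ ^ (k₁ + n + k₂ - i) * (k₁ + n + k₂).choose i)
    (fun i _ => Nat.zero_le _) hmem
  rw [hrw, hexp]
  refine le_trans ?_ hsum
  simp only [Nat.add_sub_cancel_left]
  have hc : (k₁ + k₂).choose k₁ ≤ (k₁ + n + k₂).choose (k₁ + n) := by
    have h1 : (k₁ + n + k₂).choose (k₁ + n) = (k₁ + n + k₂).choose k₂ := by
      have := Nat.choose_symm (show k₂ ≤ k₁ + n + k₂ by omega)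
      simpa using this
    have h2 : (k₁ + k₂).choose k₁ = (k₁ + k₂).choose k₂ := by
      have := Nat.choose_symm (show k₂ ≤ k₁ + k₂ by omega)
      simpa using this
    rw [h1, h2]
    exact Nat.choose_le_choose _ (by omega)
  calc Nat.choose (k₁ + k₂) k₁ * (k₁ + n) ^ (k₁ + n) * k₂ ^ k₂
      = (k₁ + n) ^ (k₁ + n) * k₂ ^ k₂ * (k₁ + k₂).choose k₁ := by ring
    _ ≤ (k₁ + n) ^ (k₁ + n) * k₂ ^ k₂ * (k₁ + n + k₂).choose (k₁ + n) :=
        Nat.mul_le_mul_left _ hc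
end

section
/- Let α ≥ 1 be a real number, n a positive integer, and k₁, k₂ natural numbers with k = k₁ + k₂. Then (k!/(k₁!·k₂!)) · (k₁+n)^(α(k₁+n)) · k₂^(α k₂) ≤ 4^(−(α−1)·min(k₁+n, k₂)) · (k+n)^(α(k+n)), where 0^0 = 1 and real exponentiation is used. -/
open Real

/-- Single multinomial term bound: `C(a+b, a) a^a b^b ≤ (a+b)^(a+b)` in `ℕ`. -/
lemma choose_pow_le (a b : ℕ) :
    (a + b).choose a * (a ^ a * b ^ b) ≤ (a + b) ^ (a + b) := by
  rw [add_pow a b (a + b)]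
  have ha : a ∈ Finset.range (a + b + 1) := by
    simp only [Finset.mem_range]; omega
  calc (a + b).choose a * (a ^ a * b ^ b)
      = a ^ a * b ^ (a + b - a) * (a + b).choose a := by
        rw [Nat.add_sub_cancel_left]; ring
    _ ≤ ∑ i ∈ Finset.range (a + b + 1), a ^ i * b ^ (a + b - i) * (a + b).choose i :=
        Finset.single_le_sum (f := fun i => a ^ i * b ^ (a + b - i) * (a + b).choose i)
          (fun i _ => Nat.zero_le _) ha

/-- Helper: `4^b a^a b^b ≤ (a+b)^(a+b)` when `b ≤ a`. -/
lemma four_pow_le_aux (b c : ℕ) :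
    4 ^ b * ((b + c) ^ (b + c) * b ^ b) ≤ (b + c + b) ^ (b + c + b) := by
  have h1 : 4 * ((b + c) * b) ≤ (b + c + b) ^ 2 := by nlinarith
  have h2 : b + c ≤ b + c + b := by omega
  calc 4 ^ b * ((b + c) ^ (b + c) * b ^ b)
      = (4 * ((b + c) * b)) ^ b * (b + c) ^ c := by
        rw [mul_pow, mul_pow, pow_add]; ring
    _ ≤ ((b + c + b) ^ 2) ^ b * (b + c + b) ^ c := by
        exact Nat.mul_le_mul (Nat.pow_le_pow_left h1 b) (Nat.pow_le_pow_left h2 c)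
    _ = (b + c + b) ^ (b + c + b) := by
        rw [← pow_mul, ← pow_add]; ring_nf

/-- `4^(min a b) a^a b^b ≤ (a+b)^(a+b)` in `ℕ`. -/
lemma four_pow_min_le (a b : ℕ) :
    4 ^ (min a b) * (a ^ a * b ^ b) ≤ (a + b) ^ (a + b) := by
  rcases le_total b a with h | h
  · obtain ⟨c, rfl⟩ := Nat.exists_eq_add_of_le h
    rw [min_eq_right (by omega : b ≤ b + c)]
    have := four_pow_le_aux b c
    calc 4 ^ b * ((b + c) ^ (b + c) * b ^ b) ≤ (b + c + b) ^ (b + c + b) :=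
          four_pow_le_aux b c
      _ = (b + c + b) ^ (b + c + b) := rfl
  · obtain ⟨c, rfl⟩ := Nat.exists_eq_add_of_le h
    rw [min_eq_left (by omega : a ≤ a + c)]
    have h' := four_pow_le_aux a c
    calc 4 ^ a * (a ^ a * (a + c) ^ (a + c))
        = 4 ^ a * ((a + c) ^ (a + c) * a ^ a) := by ring
      _ ≤ (a + c + a) ^ (a + c + a) := four_pow_le_aux a c
      _ = (a + (a + c)) ^ (a + (a + c)) := by ring_nf

/-- Monotonicity of binomial along the diagonal. -/
lemma choose_le_choose_add (m r n : ℕ) : m.choose r ≤ (m + n).choose (r + n) := by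
  induction n with
  | zero => simp
  | succ n ih =>
      calc m.choose r ≤ (m + n).choose (r + n) := ih
        _ ≤ (m + n).choose (r + n) + (m + n).choose (r + n + 1) := Nat.le_add_right _ _
        _ = (m + n + 1).choose (r + n + 1) := (Nat.choose_succ_succ' (m + n) (r + n)).symm

lemma one_le_self_pow_self (n : ℕ) : 1 ≤ n ^ n := by
  cases n with
  | zero => simp
  | succ k => exact Nat.one_le_pow _ _ (Nat.succ_pos k)

/-- Lemma A.1: for `α ≥ 1`, `n ≥ 1`, and `k = k₁ + k₂`,
`(k!/(k₁!k₂!)) (k₁+n)^(α(k₁+n)) k₂^(αk₂) ≤ 4^(-(α-1)min(k₁+n,k₂)) (k+n)^(α(k+n))`. -/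
theorem gevrey_weight_bound (α : ℝ) (hα : 1 ≤ α) (k₁ k₂ n : ℕ) (hn : 0 < n) :
    (((k₁ + k₂).factorial : ℝ) / (k₁.factorial * k₂.factorial))
        * ((k₁ : ℝ) + n) ^ (α * (k₁ + n)) * (k₂ : ℝ) ^ (α * k₂)
      ≤ (4 : ℝ) ^ (-(α - 1) * (min (k₁ + n) k₂ : ℕ))
        * ((k₁ : ℝ) + k₂ + n) ^ (α * (k₁ + k₂ + n)) := by
  -- replace the factorial quotient with a binomial coefficient
  have hC : (((k₁ + k₂).factorial : ℝ) / (k₁.factorial * k₂.factorial))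
      = ((k₁ + k₂).choose k₁ : ℝ) := by
    have h := Nat.choose_mul_factorial_mul_factorial (Nat.le_add_right k₁ k₂)
    rw [Nat.add_sub_cancel_left] at h
    rw [div_eq_iff (by positivity)]
    push_cast [← h]; ring
  rw [hC]
  -- normalize casts of the bases
  have e1 : (k₁ : ℝ) + n = ((k₁ + n : ℕ) : ℝ) := by push_cast; ring
  have e2 : (k₁ : ℝ) + k₂ + n = ((k₁ + k₂ + n : ℕ) : ℝ) := by push_cast; ring
  rw [e1, e2]
  -- turn rpow with natural exponent into rpow of a natural power
  have hcast : ∀ (x m : ℕ), ((x : ℝ)) ^ (α * (m : ℝ)) = ((x ^ m : ℕ) : ℝ) ^ α := by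
    intro x m
    rw [mul_comm, Real.rpow_mul (by positivity), Real.rpow_natCast]
    norm_cast
  rw [hcast, hcast, hcast]
  set C : ℝ := ((k₁ + k₂).choose k₁ : ℝ) with hCdef
  set N1 : ℕ := (k₁ + n) ^ (k₁ + n) with hN1
  set N2 : ℕ := k₂ ^ k₂ with hN2
  set N3 : ℕ := (k₁ + k₂ + n) ^ (k₁ + k₂ + n) with hN3
  set m : ℕ := min (k₁ + n) k₂ with hm
  -- key natural-number inequalities
  have hnat1 : (k₁ + k₂).choose k₁ * (N1 * N2) ≤ N3 := by
    have h1 : (k₁ + k₂).choose k₁ ≤ ((k₁ + n) + k₂).choose (k₁ + n) := by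
      have := choose_le_choose_add (k₁ + k₂) k₁ n
      have he : k₁ + k₂ + n = (k₁ + n) + k₂ := by omega
      rwa [he] at this
    have h2 := choose_pow_le (k₁ + n) k₂
    have he : (k₁ + n) + k₂ = k₁ + k₂ + n := by omega
    rw [he] at h1 h2
    calc (k₁ + k₂).choose k₁ * (N1 * N2)
        ≤ (k₁ + k₂ + n).choose (k₁ + n) * (N1 * N2) :=
          Nat.mul_le_mul_right _ h1
      _ ≤ N3 := h2
  have hnat2 : 4 ^ m * (N1 * N2) ≤ N3 := by
    have h := four_pow_min_le (k₁ + n) k₂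
    have he : (k₁ + n) + k₂ = k₁ + k₂ + n := by omega
    rwa [he] at h
  -- move to the reals
  have hx1 : (1 : ℝ) ≤ (N1 : ℝ) * (N2 : ℝ) := by
    have := one_le_self_pow_self (k₁ + n)
    have := one_le_self_pow_self k₂
    have h1 : (1 : ℝ) ≤ (N1 : ℝ) := by exact_mod_cast one_le_self_pow_self (k₁ + n)
    have h2 : (1 : ℝ) ≤ (N2 : ℝ) := by exact_mod_cast one_le_self_pow_self k₂
    nlinarith
  have hxpos : (0 : ℝ) < (N1 : ℝ) * (N2 : ℝ) := lt_of_lt_of_le one_pos hx1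
  have hSpos : (0 : ℝ) < (N3 : ℝ) := by
    have : (1 : ℝ) ≤ (N3 : ℝ) := by exact_mod_cast one_le_self_pow_self (k₁ + k₂ + n)
    linarith
  set x : ℝ := (N1 : ℝ) * (N2 : ℝ) with hxdef
  have hmul : (N1 : ℝ) ^ α * (N2 : ℝ) ^ α = x ^ α :=
    (Real.mul_rpow (by positivity) (by positivity)).symm
  have hxα : x ^ α = x * x ^ (α - 1) := by
    rw [show x * x ^ (α - 1) = x ^ (1 + (α - 1)) by
          rw [Real.rpow_add hxpos, Real.rpow_one],
        show (1 : ℝ) + (α - 1) = α by ring]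
  have h5 : C * x ≤ (N3 : ℝ) := by rw [hCdef, hxdef]; exact_mod_cast hnat1
  have h4m : ((4 : ℝ) ^ (m : ℕ)) = (4 : ℝ) ^ ((m : ℕ) : ℝ) := by
    rw [Real.rpow_natCast]
  have h6 : x ≤ (N3 : ℝ) / (4 : ℝ) ^ ((m : ℕ) : ℝ) := by
    rw [le_div_iff₀ (by positivity)]
    rw [← h4m]
    calc x * (4 : ℝ) ^ (m : ℕ) = (4 : ℝ) ^ (m : ℕ) * x := by ring
      _ ≤ (N3 : ℝ) := by rw [hxdef]; exact_mod_cast hnat2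
  have h7 : ((N3 : ℝ) / (4 : ℝ) ^ ((m : ℕ) : ℝ)) ^ (α - 1)
      = (4 : ℝ) ^ (-(α - 1) * (m : ℕ)) * (N3 : ℝ) ^ (α - 1) := by
    rw [Real.div_rpow (le_of_lt hSpos) (by positivity)]
    rw [← Real.rpow_mul (by norm_num : (0:ℝ) ≤ 4)]
    rw [div_eq_mul_inv, ← Real.rpow_neg (by norm_num : (0:ℝ) ≤ 4)]
    rw [mul_comm]
    ring_nf
  have h8 : x ^ (α - 1) ≤ (4 : ℝ) ^ (-(α - 1) * (m : ℕ)) * (N3 : ℝ) ^ (α - 1) := by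
    rw [← h7]
    exact Real.rpow_le_rpow (le_of_lt hxpos) h6 (by linarith)
  calc C * (N1 : ℝ) ^ α * (N2 : ℝ) ^ α
      = C * ((N1 : ℝ) ^ α * (N2 : ℝ) ^ α) := by ring
    _ = C * x ^ α := by rw [hmul]
    _ = (C * x) * x ^ (α - 1) := by rw [hxα]; ring
    _ ≤ (N3 : ℝ) * ((4 : ℝ) ^ (-(α - 1) * (m : ℕ)) * (N3 : ℝ) ^ (α - 1)) := by
        apply mul_le_mul h5 h8 (Real.rpow_nonneg (le_of_lt hxpos) _) (le_of_lt hSpos)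
    _ = (4 : ℝ) ^ (-(α - 1) * (m : ℕ)) * ((N3 : ℝ) * (N3 : ℝ) ^ (α - 1)) := by ring
    _ = (4 : ℝ) ^ (-(α - 1) * (m : ℕ)) * (N3 : ℝ) ^ α := by
        rw [show (N3 : ℝ) * (N3 : ℝ) ^ (α - 1) = (N3 : ℝ) ^ (1 + (α - 1)) by
              rw [Real.rpow_add hSpos, Real.rpow_one],
            show (1 : ℝ) + (α - 1) = α by ring]
end

section
/- Let α ≥ 1, let n be a positive integer, let k₁, k₂ be natural numbers with k = k₁+k₂, and let 1 ≤ i ≤ n be an integer. Then (k!/(k₁!·k₂!)) · (k₁+n+1−i)^(α(k₁+n+1−i)) · (k₂+i)^(α(k₂+i)) ≤ 4^(−(α−1)·min(k₁+1, k₂+1)) · (k+n+1)^(α(k+n+1)). -/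
open Real

/-- Binomial term bound: `C(A+B, A) * A^A * B^B ≤ (A+B)^(A+B)`. -/
lemma gwbs_binom (A B : ℕ) :
    (A + B).choose A * (A ^ A * B ^ B) ≤ (A + B) ^ (A + B) := by
  have h := add_pow A B (A + B)
  have hmem : A ∈ Finset.range (A + B + 1) := by
    simp [Nat.lt_succ_iff, Nat.le_add_right]
  have hsingle := Finset.single_le_sum
    (f := fun k => A ^ k * B ^ (A + B - k) * (A + B).choose k)
    (fun k _ => Nat.zero_le _) hmem
  rw [h]
  simpa [Nat.cast_id, Nat.add_sub_cancel_left, mul_comm, mul_assoc, mul_left_comm] using hsingle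

lemma gwbs_four_aux (A d : ℕ) :
    4 ^ A * (A ^ A * (A + d) ^ (A + d)) ≤ (A + (A + d)) ^ (A + (A + d)) := by
  have h2 : 4 * (A * (A + d)) ≤ (2 * A + d) ^ 2 := by nlinarith
  have h3 : A + d ≤ 2 * A + d := by omega
  have e : A + (A + d) = 2 * A + d := by ring
  rw [e]
  calc 4 ^ A * (A ^ A * (A + d) ^ (A + d))
      = (4 * (A * (A + d))) ^ A * (A + d) ^ d := by
        rw [pow_add (A + d) A d, mul_pow, mul_pow]; ring
    _ ≤ ((2 * A + d) ^ 2) ^ A * (2 * A + d) ^ d :=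
        Nat.mul_le_mul (Nat.pow_le_pow_left h2 A) (Nat.pow_le_pow_left h3 d)
    _ = (2 * A + d) ^ (2 * A + d) := by
        rw [← pow_mul, ← pow_add]

/-- `4^(min A B) * A^A * B^B ≤ (A+B)^(A+B)`. -/
lemma gwbs_four (A B : ℕ) :
    4 ^ min A B * (A ^ A * B ^ B) ≤ (A + B) ^ (A + B) := by
  rcases le_total A B with h | h
  · obtain ⟨d, rfl⟩ := Nat.exists_eq_add_of_le h
    rw [min_eq_left h]
    exact gwbs_four_aux A d
  · obtain ⟨d, rfl⟩ := Nat.exists_eq_add_of_le h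
    rw [min_eq_right h]
    have := gwbs_four_aux B d
    calc 4 ^ B * ((B + d) ^ (B + d) * B ^ B)
        = 4 ^ B * (B ^ B * (B + d) ^ (B + d)) := by ring
      _ ≤ (B + (B + d)) ^ (B + (B + d)) := gwbs_four_aux B d
      _ = (B + d + B) ^ (B + d + B) := by rw [add_comm B (B + d)]

/-- Choose monotonicity: `C(k, r) ≤ C(k+t, r+t)`. -/
lemma gwbs_choose (k r t : ℕ) : k.choose r ≤ (k + t).choose (r + t) := by
  induction t with
  | zero => simp
  | succ t ih =>
      calc k.choose r ≤ (k + t).choose (r + t) := ih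
        _ ≤ (k + t + 1).choose (r + t + 1) := by
            rw [Nat.choose_succ_succ]
            exact Nat.le_add_right _ _

/-- Corollary A.2: for `α ≥ 1`, `1 ≤ i ≤ n`, and `k = k₁ + k₂`,
`(k!/(k₁!k₂!)) (k₁+n+1-i)^(α(k₁+n+1-i)) (k₂+i)^(α(k₂+i))
  ≤ 4^(-(α-1)min(k₁+1,k₂+1)) (k+n+1)^(α(k+n+1))`. -/
theorem gevrey_weight_bound_shifted (α : ℝ) (hα : 1 ≤ α) (k₁ k₂ n i : ℕ)
    (hi₁ : 1 ≤ i) (hi₂ : i ≤ n) :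
    (((k₁ + k₂).factorial : ℝ) / (k₁.factorial * k₂.factorial))
        * ((k₁ + n + 1 - i : ℕ) : ℝ) ^ (α * ((k₁ + n + 1 - i : ℕ) : ℝ))
        * ((k₂ : ℝ) + i) ^ (α * (k₂ + i))
      ≤ (4 : ℝ) ^ (-(α - 1) * (min (k₁ + 1) (k₂ + 1) : ℕ))
        * ((k₁ : ℝ) + k₂ + n + 1) ^ (α * ((k₁ : ℝ) + k₂ + n + 1)) := by
  -- Notation
  set A : ℕ := k₁ + n + 1 - i with hAdef
  set B : ℕ := k₂ + i with hBdef
  set N : ℕ := k₁ + k₂ + n + 1 with hNdef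
  set m : ℕ := min (k₁ + 1) (k₂ + 1) with hmdef
  have hA1 : 1 ≤ A := by omega
  have hB1 : 1 ≤ B := by omega
  have hABN : A + B = N := by omega
  have hminm : m ≤ min A B := by omega
  set c : ℕ := (k₁ + k₂).choose k₁ with hcdef
  -- the factorial quotient is the binomial coefficient
  have hC : (((k₁ + k₂).factorial : ℝ) / (k₁.factorial * k₂.factorial)) = (c : ℝ) := by
    have h' : c * k₁.factorial * k₂.factorial = (k₁ + k₂).factorial := by
      have h := Nat.choose_mul_factorial_mul_factorial (Nat.le_add_right k₁ k₂)
      simpa [Nat.add_sub_cancel_left, hcdef] using h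
    rw [div_eq_iff (by positivity)]
    push_cast [← h']
    ring
  -- choose comparison
  have hchoose : c ≤ (A + B).choose A := by
    have h1 : c ≤ (k₁ + k₂ + (n + 1 - i)).choose (k₁ + (n + 1 - i)) :=
      gwbs_choose (k₁ + k₂) k₁ (n + 1 - i)
    have h3 : k₁ + (n + 1 - i) = A := by omega
    rw [h3] at h1
    have h2 : (k₁ + k₂ + (n + 1 - i)).choose A ≤ (A + B).choose A :=
      Nat.choose_le_choose _ (by omega)
    exact le_trans h1 h2
  -- key natural-number inequalities
  set x : ℕ := A ^ A with hxdef
  set y : ℕ := B ^ B with hydef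
  set z : ℕ := N ^ N with hzdef
  have hnat1 : c * (x * y) ≤ z := by
    calc c * (x * y) ≤ (A + B).choose A * (x * y) :=
          Nat.mul_le_mul_right _ hchoose
      _ ≤ (A + B) ^ (A + B) := gwbs_binom A B
      _ = z := by rw [hABN]
  have hnat2 : 4 ^ m * (x * y) ≤ z := by
    calc 4 ^ m * (x * y) ≤ 4 ^ min A B * (x * y) :=
          Nat.mul_le_mul_right _ (Nat.pow_le_pow_right (by norm_num) hminm)
      _ ≤ (A + B) ^ (A + B) := gwbs_four A B
      _ = z := by rw [hABN]
  -- positivity facts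
  have hx0 : (0:ℝ) < (x : ℝ) := by
    have : 0 < x := by rw [hxdef]; exact pow_pos (by omega) A
    exact_mod_cast this
  have hy0 : (0:ℝ) < (y : ℝ) := by
    have : 0 < y := by rw [hydef]; exact pow_pos (by omega) B
    exact_mod_cast this
  have hz0 : (0:ℝ) < (z : ℝ) := by
    have : 0 < z := by rw [hzdef]; exact pow_pos (by omega) N
    exact_mod_cast this
  -- rewrite the rpow terms
  have key : ∀ M : ℕ, (M : ℝ) ^ (α * (M : ℝ)) = ((M ^ M : ℕ) : ℝ) ^ α := by
    intro M
    rw [mul_comm, Real.rpow_mul (Nat.cast_nonneg M), Real.rpow_natCast, Nat.cast_pow]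
  have hBcast : ((k₂ : ℝ) + i) = (B : ℝ) := by simp only [hBdef]; push_cast; ring
  have hNcast : ((k₁ : ℝ) + k₂ + n + 1) = (N : ℝ) := by simp only [hNdef]; push_cast; ring
  rw [hC, hBcast, hNcast, key A, key B, key N]
  rw [← hxdef, ← hydef, ← hzdef]
  -- now: (c:ℝ) * x^α * y^α ≤ 4^(-(α-1)*m) * z^α
  set u : ℝ := (x : ℝ) * (y : ℝ) with hudef
  have hu0 : (0:ℝ) < u := mul_pos hx0 hy0
  have h1 : (c : ℝ) * u ≤ (z : ℝ) := by
    rw [hudef, ← mul_assoc]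
    have : ((c * (x * y) : ℕ) : ℝ) ≤ ((z : ℕ) : ℝ) := Nat.cast_le.mpr hnat1
    push_cast at this
    linarith
  have h2 : u ≤ (4:ℝ) ^ (-(m:ℝ)) * (z : ℝ) := by
    have h4 : (4:ℝ) ^ (m:ℕ) * u ≤ (z : ℝ) := by
      rw [hudef]
      have : ((4 ^ m * (x * y) : ℕ) : ℝ) ≤ ((z : ℕ) : ℝ) := Nat.cast_le.mpr hnat2
      push_cast at this
      linarith
    rw [Real.rpow_neg (by norm_num), Real.rpow_natCast, inv_mul_eq_div,
      le_div_iff₀ (by positivity)]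
    linarith [h4]
  have hupow : u ^ α = u * u ^ (α - 1) := by
    have : α = 1 + (α - 1) := by ring
    rw [this, Real.rpow_add hu0, Real.rpow_one]
    ring_nf
  have hzpow : (z:ℝ) ^ α = (z:ℝ) * (z:ℝ) ^ (α - 1) := by
    have : α = 1 + (α - 1) := by ring
    rw [this, Real.rpow_add hz0, Real.rpow_one]
    ring_nf
  have hxyu : (x:ℝ) ^ α * (y:ℝ) ^ α = u ^ α := by
    rw [hudef, Real.mul_rpow hx0.le hy0.le]
  calc (c : ℝ) * (x:ℝ) ^ α * (y:ℝ) ^ α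
      = ((c:ℝ) * u) * u ^ (α - 1) := by
        rw [mul_assoc, hxyu, hupow]; ring
    _ ≤ (z:ℝ) * ((4:ℝ) ^ (-(m:ℝ)) * (z:ℝ)) ^ (α - 1) := by
        apply mul_le_mul h1
        · exact Real.rpow_le_rpow hu0.le h2 (by linarith)
        · positivity
        · exact hz0.le
    _ = (4:ℝ) ^ (-(α - 1) * (m:ℝ)) * (z:ℝ) ^ α := by
        rw [Real.mul_rpow (by positivity) hz0.le,
          ← Real.rpow_mul (by norm_num : (0:ℝ) ≤ 4)]
        have he : -(m:ℝ) * (α - 1) = -(α - 1) * (m:ℝ) := by ring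
        rw [he, hzpow]
        ring
end

section
/- For every integer n ≥ 1, the sum over i from 1 to n of 1 / ((10n + 10.3 − 10i)² · (10i + 0.3)²) is strictly less than 0.05 / (10n + 10.3)². -/
open Finset

lemma sum_Icc_reflect_aux (n : ℕ) (f : ℕ → ℝ) :
    ∑ i ∈ Finset.Icc 1 n, f (n + 1 - i) = ∑ i ∈ Finset.Icc 1 n, f i := by
  refine Finset.sum_nbij' (fun i => n + 1 - i) (fun i => n + 1 - i) ?_ ?_ ?_ ?_ ?_
  · intro a ha; simp only [Finset.mem_Icc] at *; omega
  · intro a ha; simp only [Finset.mem_Icc] at *; omega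
  · intro a ha; simp only [Finset.mem_Icc] at *; omega
  · intro a ha; simp only [Finset.mem_Icc] at *; omega
  · intro a ha; rfl

lemma T2_aux_crazy (n : ℕ) (hn : 1 ≤ n) :
    ∑ i ∈ Finset.Icc 1 n, 1 / (10 * (i : ℝ) + 0.3) ^ 2 ≤ 0.016 - 1 / (100 * (n : ℝ) + 53) := by
  induction n with
  | zero => omega
  | succ m ih =>
    rcases Nat.lt_or_ge m 1 with h | hm
    · interval_cases m
      norm_num [Finset.Icc_self]
    · rw [Finset.sum_Icc_succ_top (by omega)]
      have ihm := ih hm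
      have hx : (1:ℝ) ≤ (m:ℝ) := by exact_mod_cast hm
      have key : 1 / (10 * ((m:ℝ)+1) + 0.3) ^ 2
          ≤ 1 / (100 * (m:ℝ) + 53) - 1 / (100 * ((m:ℝ)+1) + 53) := by
        rw [div_sub_div _ _ (by nlinarith) (by nlinarith),
          div_le_div_iff₀ (by nlinarith) (by nlinarith)]
        nlinarith
      push_cast
      push_cast at ihm
      linarith

lemma T1_aux_crazy (n : ℕ) (hn : 4 ≤ n) :
    ∑ i ∈ Finset.Icc 1 n, 1 / (10 * (i : ℝ) + 0.3) ≤ (10 * (n:ℝ) + 10.6) / 240 := by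
  induction n with
  | zero => omega
  | succ m ih =>
    rcases Nat.lt_or_ge m 4 with h | hm
    · interval_cases m
      · omega
      · omega
      · omega
      · rw [Finset.sum_Icc_succ_top (by omega),
          Finset.sum_Icc_succ_top (by omega), Finset.sum_Icc_succ_top (by omega),
          Finset.Icc_self, Finset.sum_singleton]
        norm_num
    · rw [Finset.sum_Icc_succ_top (by omega)]
      have ihm := ih hm
      have hx : (4:ℝ) ≤ (m:ℝ) := by exact_mod_cast hm
      have key : 1 / (10 * ((m:ℝ)+1) + 0.3) ≤ 10 / 240 := by
        rw [div_le_div_iff₀ (by nlinarith) (by norm_num)]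
        nlinarith
      push_cast
      linarith

set_option maxHeartbeats 800000 in
/-- Inequality (crazy): for `n ≥ 1`,
`Σ_{i=1}^n 1/((10n+10.3-10i)²(10i+0.3)²) < 0.05/(10n+10.3)²`. -/
theorem convolution_sum_bound (n : ℕ) (hn : 1 ≤ n) :
    ∑ i ∈ Finset.Icc 1 n,
        1 / ((10 * (n : ℝ) + 10.3 - 10 * (i : ℝ)) ^ 2 * (10 * (i : ℝ) + 0.3) ^ 2)
      < 0.05 / (10 * (n : ℝ) + 10.3) ^ 2 := by
  rcases Nat.lt_or_ge n 4 with h4 | h4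
  · interval_cases n
    · norm_num [Finset.Icc_self]
    · rw [show Finset.Icc 1 2 = {1, 2} from rfl]
      norm_num
    · rw [show Finset.Icc 1 3 = {1, 2, 3} from rfl]
      norm_num
  · have hT2 := T2_aux_crazy n (by omega)
    have hT1 := T1_aux_crazy n h4
    have han : (4:ℝ) ≤ (n:ℝ) := by exact_mod_cast h4
    set a : ℝ := 10 * (n:ℝ) + 10.6 with ha
    have hapos : (0:ℝ) < a := by rw [ha]; nlinarith
    have key : ∀ i ∈ Finset.Icc 1 n,
        1 / ((10 * (n : ℝ) + 10.3 - 10 * (i : ℝ)) ^ 2 * (10 * (i : ℝ) + 0.3) ^ 2)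
        = (1/a^2) * (1 / (10 * ((n+1-i : ℕ):ℝ) + 0.3) ^ 2 + 1 / (10 * (i:ℝ) + 0.3) ^ 2)
          + (2/a^3) * (1 / (10 * ((n+1-i : ℕ):ℝ) + 0.3) + 1 / (10 * (i:ℝ) + 0.3)) := by
      intro i hi
      simp only [Finset.mem_Icc] at hi
      have h1 : (1:ℝ) ≤ (i:ℝ) := by exact_mod_cast hi.1
      have h2 : (i:ℝ) ≤ (n:ℝ) := by exact_mod_cast hi.2
      have hc : ((n+1-i : ℕ):ℝ) = (n:ℝ) + 1 - (i:ℝ) := by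
        have hle : i ≤ n + 1 := by omega
        push_cast [Nat.cast_sub hle]
        ring
      rw [hc]
      have hA : (0:ℝ) < 10 * (n:ℝ) + 10.3 - 10 * (i:ℝ) := by nlinarith
      have hB : (0:ℝ) < 10 * (i:ℝ) + 0.3 := by nlinarith
      have hA' : 10 * ((n:ℝ) + 1 - (i:ℝ)) + 0.3 = 10 * (n:ℝ) + 10.3 - 10 * (i:ℝ) := by ring
      rw [hA']
      have haab : a = (10 * (n:ℝ) + 10.3 - 10 * (i:ℝ)) + (10 * (i:ℝ) + 0.3) := by rw [ha]; ring
      rw [haab]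
      field_simp
      ring
    rw [Finset.sum_congr rfl key, Finset.sum_add_distrib, ← Finset.mul_sum, ← Finset.mul_sum,
      Finset.sum_add_distrib, Finset.sum_add_distrib,
      sum_Icc_reflect_aux n (fun j => 1 / (10 * (j:ℝ) + 0.3) ^ 2),
      sum_Icc_reflect_aux n (fun j => 1 / (10 * (j:ℝ) + 0.3))]
    set T2 := ∑ i ∈ Finset.Icc 1 n, 1 / (10 * (i : ℝ) + 0.3) ^ 2
    set T1 := ∑ i ∈ Finset.Icc 1 n, 1 / (10 * (i : ℝ) + 0.3)
    have hT2' : T2 ≤ 0.016 := by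
      have : (0:ℝ) < 1 / (100 * (n : ℝ) + 53) := by positivity
      linarith
    have hT2pos : (0:ℝ) ≤ T2 := by positivity
    have hT1pos : (0:ℝ) ≤ T1 := by positivity
    have e1 : (1/a^2) * (T2 + T2) ≤ (1/a^2) * 0.032 := by
      exact mul_le_mul_of_nonneg_left (by linarith) (by positivity)
    have e2 : (2/a^3) * (T1 + T1) ≤ (2/a^3) * (2 * (a/240)) := by
      exact mul_le_mul_of_nonneg_left (by linarith) (by positivity)
    have e3 : (1/a^2) * 0.032 + (2/a^3) * (2 * (a/240)) = (0.032 + 1/60) / a^2 := by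
      field_simp
      ring
    have hm : (0:ℝ) < 10 * (n:ℝ) + 10.3 := by nlinarith
    have hma : 10 * (n:ℝ) + 10.3 ≤ a := by rw [ha]; nlinarith
    have final : (0.032 + 1/60 : ℝ) / a^2 < 0.05 / (10 * (n : ℝ) + 10.3) ^ 2 := by
      rw [div_lt_div_iff₀ (by positivity) (by positivity)]
      nlinarith [sq_nonneg (a - (10 * (n:ℝ) + 10.3)), mul_pos hm hm]
    linarith
end

section
/- Let α > 1, k ≥ 1, n ≥ 0. Then Σ_{i=1}^{n} Σ_{k₁+k₂=k} [1/((10n+10.3−10i)²(10i+0.3)²)] · (k!/(k₁!k₂!)) · (k₁+3(n+1−i))^(α(k₁+3(n+1−i))) · (k₂+3i)^(α(k₂+3i)) ≤ [0.05 · 4^(−(α−3/2))/(1 − 4^(−(α−1)))] · (k+3(n+1))^(α(k+3(n+1))) / (10n+10.3)². -/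
open Real Finset

/-!
With `a = k₁ + 3(n+1-i)` and `b = k₂ + 3i`, the binomial coefficient absorbs `a^k₁ b^k₂` into
`(a+b)^k`, and the remaining powers `a^(αa-k₁) b^(αb-k₂)` each lose a factor `2^((α-1) min a b)`
against `(a+b)`, so every weight is at most `r^(min k₁ k₂ + 1) (a+b)^(α(a+b))` with
`r = 4^(-(α-1))`. Summing over `k₁ + k₂ = k` gives at most `2r/(1-r)`, and `2r = 4^(-(α-3/2))`.

For the coefficients put `x = 10(n+1-i)+0.3`, `y = 10i+0.3`. Since `x + y = 10n+10.6` and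
`1/(xy) = (1/x+1/y)/(x+y)`, the coefficient sum is at most `(10n+10.3)^(-2) Σ (1/x+1/y)^2`, and
`Σ (1/x+1/y)^2 = 2 Σ 1/x^2 + 4 (Σ 1/x)/(10n+10.6)`. This is below `0.05`: the tail of `Σ 1/x^2`
telescopes, `Σ 1/x` grows at most with slope `1/50.3`, and the cases `n < 4` are checked directly.
-/

lemma mul_log_two_le_log_one_add {x : ℝ} (h0 : 0 ≤ x) (h1 : x ≤ 1) :
    x * log 2 ≤ log (1 + x) := by
  have hbern : (2 : ℝ) ^ x ≤ 1 + x := by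
    simpa [one_add_one_eq_two] using rpow_one_add_le_one_add_mul_self (s := 1) (by norm_num) h0 h1
  rw [← log_rpow two_pos]
  exact log_le_log (by positivity) hbern

lemma rpow_sub_mul_rpow_sub_le {α a b k₁ k₂ μ : ℝ} (hα : 1 ≤ α) (ha : 0 < a) (hb : 0 < b)
    (hk₁ : k₁ ≤ a) (hk₂ : k₂ ≤ b) (hμa : μ ≤ a) (hμb : μ ≤ b) :
    a ^ (α * a - k₁) * b ^ (α * b - k₂)
      ≤ 4 ^ (-(α - 1) * μ) * (a + b) ^ (α * (a + b) - (k₁ + k₂)) := by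
  wlog hab : a ≤ b generalizing a b k₁ k₂
  · have := this hb ha hk₂ hk₁ hμb hμa (le_of_not_ge hab)
    rwa [mul_comm, add_comm b, add_comm k₂] at this
  have hS : 0 < a + b := by linarith
  have hlog2 : 0 < log 2 := log_pos one_lt_two
  -- Both factors lose at least `(α - 1) a log 2` against `(a + b)`: the first because
  -- `a + b ≥ 2a`, the second because `log (1 + a/b) ≥ (a/b) log 2`.
  have hfirst : (α - 1) * a * log 2 ≤ (α * a - k₁) * (log (a + b) - log a) := by
    have hdiff : log 2 ≤ log (a + b) - log a := by
      rw [← log_div hS.ne' ha.ne']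
      exact log_le_log two_pos (by rw [le_div_iff₀ ha]; linarith)
    exact mul_le_mul (by linarith) hdiff hlog2.le (by nlinarith)
  have hsecond : (α - 1) * a * log 2 ≤ (α * b - k₂) * (log (a + b) - log b) := by
    have hdiff : a / b * log 2 ≤ log (a + b) - log b := by
      rw [← log_div hS.ne' hb.ne', add_div, div_self hb.ne', add_comm]
      exact mul_log_two_le_log_one_add (by positivity) ((div_le_one hb).mpr hab)
    calc (α - 1) * a * log 2 = (α - 1) * b * (a / b * log 2) := by field_simp
      _ ≤ (α * b - k₂) * (log (a + b) - log b) :=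
        mul_le_mul (by linarith) hdiff (by positivity) (by nlinarith)
  have hμ : (α - 1) * μ * log 2 ≤ (α - 1) * a * log 2 := by gcongr
  rw [← log_le_log_iff (by positivity) (by positivity), log_mul (by positivity) (by positivity),
    log_mul (by positivity) (by positivity), log_rpow ha, log_rpow hb, log_rpow hS,
    log_rpow four_pos, show (4 : ℝ) = 2 ^ 2 by norm_num, log_pow]
  push_cast
  nlinarith

lemma choose_mul_pow_mul_pow_le_add_pow {a b : ℝ} (ha : 0 ≤ a) (hb : 0 ≤ b) (m n : ℕ) :
    ((m + n).choose m : ℝ) * a ^ m * b ^ n ≤ (a + b) ^ (m + n) := by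
  rw [add_pow]
  calc _ = a ^ m * b ^ (m + n - m) * ((m + n).choose m : ℝ) := by rw [add_tsub_cancel_left]; ring
    _ ≤ _ := single_le_sum (f := fun j ↦ a ^ j * b ^ (m + n - j) * ((m + n).choose j : ℝ))
      (fun j _ ↦ by positivity) (mem_range.mpr (by omega))

lemma factorial_div_mul_rpow_mul_rpow_le {α a b : ℝ} (hα : 1 ≤ α) {k₁ k₂ : ℕ}
    (ha : k₁ + 1 ≤ a) (hb : k₂ + 1 ≤ b) :
    ((k₁ + k₂).factorial : ℝ) / (k₁.factorial * k₂.factorial) * a ^ (α * a) * b ^ (α * b)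
      ≤ ((4 : ℝ) ^ (-(α - 1))) ^ (min k₁ k₂ + 1) * (a + b) ^ (α * (a + b)) := by
  have ha0 : 0 < a := by linarith [(k₁.cast_nonneg : (0 : ℝ) ≤ k₁)]
  have hb0 : 0 < b := by linarith [(k₂.cast_nonneg : (0 : ℝ) ≤ k₂)]
  have hmin : min (k₁ : ℝ) k₂ + 1 ≤ min a b :=
    le_min (by linarith [min_le_left (k₁ : ℝ) k₂]) (by linarith [min_le_right (k₁ : ℝ) k₂])
  have hsplit (x : ℝ) (hx : 0 < x) (m : ℕ) : x ^ (α * x) = x ^ m * x ^ (α * x - m) := by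
    rw [← rpow_natCast, ← rpow_add hx, add_sub_cancel]
  rw [← Nat.cast_add_choose, hsplit a ha0 k₁, hsplit b hb0 k₂,
    hsplit (a + b) (by positivity) (k₁ + k₂), ← rpow_mul_natCast four_pos.le]
  calc _ = ((k₁ + k₂).choose k₁ * a ^ k₁ * b ^ k₂ : ℝ) * (a ^ (α * a - k₁) * b ^ (α * b - k₂)) := by
        ring
    _ ≤ (a + b) ^ (k₁ + k₂) * (4 ^ (-(α - 1) * ((min k₁ k₂ + 1 : ℕ) : ℝ))
          * (a + b) ^ (α * (a + b) - ((k₁ + k₂ : ℕ) : ℝ))) := by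
      refine mul_le_mul (choose_mul_pow_mul_pow_le_add_pow ha0.le hb0.le k₁ k₂) ?_
        (by positivity) (by positivity)
      push_cast
      exact rpow_sub_mul_rpow_sub_le hα ha0 hb0 (by linarith) (by linarith)
        (by linarith [min_le_left a b]) (by linarith [min_le_right a b])
    _ = _ := by ring

lemma sum_antidiagonal_pow_min_succ_le {r : ℝ} (hr0 : 0 ≤ r) (hr1 : r < 1) (k : ℕ) :
    ∑ p ∈ antidiagonal k, r ^ (min p.1 p.2 + 1) ≤ 2 * r / (1 - r) := by
  have hfst : ∑ p ∈ antidiagonal k, r ^ (p.1 + 1) ≤ r / (1 - r) := by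
    rw [Nat.sum_antidiagonal_eq_sum_range_succ_mk]
    simp only [pow_succ', ← mul_sum]
    refine (mul_le_mul_of_nonneg_left ?_ hr0).trans_eq (mul_one_div r (1 - r))
    have := geom_sum_Ico_le_of_lt_one (m := 0) (n := k + 1) hr0 hr1
    rwa [← range_eq_Ico, pow_zero] at this
  calc ∑ p ∈ antidiagonal k, r ^ (min p.1 p.2 + 1)
      ≤ ∑ p ∈ antidiagonal k, (r ^ (p.1 + 1) + r ^ (p.2 + 1)) := by
        refine sum_le_sum fun p _ ↦ ?_
        rcases min_choice p.1 p.2 with h | h <;> rw [h] <;> simp [pow_nonneg hr0]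
    _ = 2 * ∑ p ∈ antidiagonal k, r ^ (p.1 + 1) := by
        rw [sum_add_distrib, ← Nat.sum_antidiagonal_swap]
        simp only [Prod.fst_swap]
        ring
    _ ≤ 2 * r / (1 - r) := by rw [mul_div_assoc]; gcongr

-- The `i`-th coefficient of the corollary is `(coef (n - i) * coef (i - 1)) ^ 2`.
noncomputable def coef (j : ℕ) : ℝ := (10 * j + 10.3)⁻¹

lemma coef_mul_coef {u v n : ℕ} (h : u + v + 1 = n) :
    coef u * coef v = (coef u + coef v) / (10 * n + 10.6) := by
  subst h
  unfold coef
  push_cast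
  field_simp
  ring

lemma coef_sq_le_sub (j : ℕ) :
    coef j ^ 2 ≤ (10 * (10 * (j : ℝ) + 0.3))⁻¹ - (10 * (10 * ((j + 1 : ℕ) : ℝ) + 0.3))⁻¹ := by
  unfold coef
  have hx : (0 : ℝ) < 10 * j + 0.3 := by positivity
  have htel : (10 * (10 * (j : ℝ) + 0.3))⁻¹ - (10 * (10 * ((j + 1 : ℕ) : ℝ) + 0.3))⁻¹
      = ((10 * j + 0.3) * (10 * j + 10.3) : ℝ)⁻¹ := by
    push_cast
    field_simp
    ring
  rw [htel, inv_pow, sq]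
  gcongr
  linarith

lemma sum_range_coef_sq_le (n : ℕ) :
    ∑ j ∈ range n, coef j ^ 2 ≤ ∑ j ∈ range 4, coef j ^ 2 + 403⁻¹ := by
  set g : ℕ → ℝ := fun j ↦ (10 * (10 * (j : ℝ) + 0.3))⁻¹
  calc ∑ j ∈ range n, coef j ^ 2 ≤ ∑ j ∈ range (4 + n), coef j ^ 2 :=
        sum_le_sum_of_subset_of_nonneg (range_subset_range.mpr (by omega)) fun _ _ _ ↦ by positivity
    _ = ∑ j ∈ range 4, coef j ^ 2 + ∑ j ∈ range n, coef (4 + j) ^ 2 := sum_range_add _ _ _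
    _ ≤ ∑ j ∈ range 4, coef j ^ 2 + ∑ j ∈ range n, (g (4 + j) - g (4 + j + 1)) := by
        gcongr with j
        exact coef_sq_le_sub (4 + j)
    _ = ∑ j ∈ range 4, coef j ^ 2 + (g 4 - g (4 + n)) := by
        congr 1
        exact sum_range_sub' (fun j ↦ g (4 + j)) n
    _ ≤ ∑ j ∈ range 4, coef j ^ 2 + 403⁻¹ := by
        have : 0 ≤ g (4 + n) := by positivity
        have : g 4 = 403⁻¹ := by norm_num [g]
        linarith

lemma sum_range_coef_le (m : ℕ) :
    ∑ j ∈ range (4 + m), coef j ≤ ∑ j ∈ range 4, coef j + m * 50.3⁻¹ := by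
  rw [sum_range_add]
  gcongr
  calc ∑ j ∈ range m, coef (4 + j) ≤ ∑ _j ∈ range m, (50.3 : ℝ)⁻¹ := by
        refine sum_le_sum fun j _ ↦ inv_anti₀ (by norm_num) ?_
        push_cast
        linarith [(j.cast_nonneg : (0 : ℝ) ≤ j)]
    _ = m * 50.3⁻¹ := by simp

lemma sum_range_sq_coef_add_reflect (n : ℕ) :
    ∑ j ∈ range n, (coef (n - 1 - j) + coef j) ^ 2
      = 2 * ∑ j ∈ range n, coef j ^ 2 + 4 * (∑ j ∈ range n, coef j) / (10 * n + 10.6) := by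
  have hexpand : ∀ j ∈ range n, (coef (n - 1 - j) + coef j) ^ 2
      = coef (n - 1 - j) ^ 2 + coef j ^ 2 + 2 * (coef (n - 1 - j) + coef j) / (10 * n + 10.6) := by
    intro j hj
    rw [add_sq, mul_assoc, coef_mul_coef (n := n) (by have := mem_range.mp hj; omega)]
    ring
  rw [sum_congr rfl hexpand, sum_add_distrib, sum_add_distrib, ← sum_div, ← mul_sum,
    sum_add_distrib, sum_range_reflect (fun j ↦ coef j ^ 2), sum_range_reflect coef]
  ring

lemma two_mul_sum_coef_sq_add_le (n : ℕ) :
    2 * ∑ j ∈ range n, coef j ^ 2 + 4 * (∑ j ∈ range n, coef j) / (10 * n + 10.6) ≤ 0.05 := by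
  rcases lt_or_ge n 4 with hn | hn
  · interval_cases n <;> norm_num [coef, sum_range_succ]
  obtain ⟨m, rfl⟩ : ∃ m, n = 4 + m := ⟨n - 4, by omega⟩
  have hsq := sum_range_coef_sq_le (4 + m)
  have hlin := sum_range_coef_le m
  have hm : (0 : ℝ) ≤ m := m.cast_nonneg
  norm_num [coef, sum_range_succ] at hsq hlin ⊢
  rw [← le_sub_iff_add_le', div_le_iff₀ (by positivity)]
  nlinarith

lemma sum_Icc_one_div_sq_mul_sq_le (n : ℕ) :
    ∑ i ∈ Icc 1 n, (1 : ℝ) / ((10 * (n : ℝ) + 10.3 - 10 * i) ^ 2 * (10 * (i : ℝ) + 0.3) ^ 2)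
      ≤ (0.05 : ℝ) / (10 * n + 10.3) ^ 2 := by
  have hterm : ∀ j ∈ range n,
      1 / ((10 * (n : ℝ) + 10.3 - 10 * (1 + j : ℕ)) ^ 2 * (10 * ((1 + j : ℕ) : ℝ) + 0.3) ^ 2)
        ≤ (coef (n - 1 - j) + coef j) ^ 2 * coef n ^ 2 := by
    intro j hj
    obtain ⟨u, rfl⟩ : ∃ u, n = u + j + 1 := ⟨n - 1 - j, by have := mem_range.mp hj; omega⟩
    have hprod : 1 / ((10 * ((u + j + 1 : ℕ) : ℝ) + 10.3 - 10 * (1 + j : ℕ)) ^ 2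
        * (10 * ((1 + j : ℕ) : ℝ) + 0.3) ^ 2) = (coef u * coef j) ^ 2 := by
      unfold coef
      rw [show 10 * ((u + j + 1 : ℕ) : ℝ) + 10.3 - 10 * (1 + j : ℕ) = 10 * u + 10.3 by
        push_cast; ring]
      push_cast
      field_simp
      ring
    rw [show u + j + 1 - 1 - j = u by omega, hprod, coef_mul_coef rfl, div_pow, div_eq_mul_inv,
      ← inv_pow]
    gcongr
    unfold coef
    gcongr
    norm_num
  calc ∑ i ∈ Icc 1 n, 1 / ((10 * (n : ℝ) + 10.3 - 10 * i) ^ 2 * (10 * (i : ℝ) + 0.3) ^ 2)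
      = ∑ j ∈ range n, 1 / ((10 * (n : ℝ) + 10.3 - 10 * (1 + j : ℕ)) ^ 2
          * (10 * ((1 + j : ℕ) : ℝ) + 0.3) ^ 2) := by
        rw [← Ico_add_one_right_eq_Icc, sum_Ico_eq_sum_range, add_tsub_cancel_right]
    _ ≤ (∑ j ∈ range n, (coef (n - 1 - j) + coef j) ^ 2) * coef n ^ 2 := by
        rw [sum_mul]
        exact sum_le_sum hterm
    _ ≤ 0.05 * coef n ^ 2 := by
        gcongr
        rw [sum_range_sq_coef_add_reflect]
        exact two_mul_sum_coef_sq_add_le n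
    _ = 0.05 / (10 * n + 10.3) ^ 2 := by rw [coef, inv_pow, div_eq_mul_inv]

theorem corollary_A3_general (α : ℝ) (hα : 1 < α) (k n : ℕ) :
    ∑ i ∈ Finset.Icc 1 n, ∑ p ∈ Finset.HasAntidiagonal.antidiagonal k,
        (1 / ((10 * (n : ℝ) + 10.3 - 10 * (i : ℝ)) ^ 2 * (10 * (i : ℝ) + 0.3) ^ 2))
          * ((k.factorial : ℝ) / (p.1.factorial * p.2.factorial))
          * ((p.1 : ℝ) + 3 * ((n : ℝ) + 1 - i)) ^ (α * ((p.1 : ℝ) + 3 * ((n : ℝ) + 1 - i)))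
          * ((p.2 : ℝ) + 3 * i) ^ (α * ((p.2 : ℝ) + 3 * i))
      ≤ (0.05 * (4 : ℝ) ^ (-(α - 3 / 2)) / (1 - (4 : ℝ) ^ (-(α - 1))))
          * ((k : ℝ) + 3 * ((n : ℝ) + 1)) ^ (α * ((k : ℝ) + 3 * ((n : ℝ) + 1)))
          / (10 * (n : ℝ) + 10.3) ^ 2 := by
  set r : ℝ := (4 : ℝ) ^ (-(α - 1))
  set S : ℝ := (k : ℝ) + 3 * ((n : ℝ) + 1)
  have hr1 : r < 1 := rpow_lt_one_of_one_lt_of_neg (by norm_num) (by linarith)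
  have hfour : (4 : ℝ) ^ (-(α - 3 / 2)) = 2 * r := by
    rw [show -(α - 3 / 2) = 1 / 2 + -(α - 1) by ring, rpow_add four_pos]
    congr 1
    rw [show (4 : ℝ) = 2 ^ (2 : ℝ) by norm_num, ← rpow_mul two_pos.le]
    norm_num
  have hweight : ∀ i ∈ Icc 1 n, ∀ p ∈ antidiagonal k,
      (k.factorial : ℝ) / (p.1.factorial * p.2.factorial)
          * ((p.1 : ℝ) + 3 * ((n : ℝ) + 1 - i)) ^ (α * ((p.1 : ℝ) + 3 * ((n : ℝ) + 1 - i)))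
          * ((p.2 : ℝ) + 3 * i) ^ (α * ((p.2 : ℝ) + 3 * i))
        ≤ r ^ (min p.1 p.2 + 1) * S ^ (α * S) := by
    intro i hi p hp
    have hi' : (1 : ℝ) ≤ i ∧ (i : ℝ) ≤ n := by exact_mod_cast mem_Icc.mp hi
    rw [HasAntidiagonal.mem_antidiagonal] at hp
    have hS : (p.1 + 3 * ((n : ℝ) + 1 - i)) + (p.2 + 3 * i) = S := by
      simp only [S, ← hp]
      push_cast
      ring
    rw [← hS, ← hp]
    exact factorial_div_mul_rpow_mul_rpow_le hα.le (by linarith) (by linarith)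
  calc _ ≤ ∑ i ∈ Icc 1 n, ∑ p ∈ antidiagonal k,
        1 / ((10 * (n : ℝ) + 10.3 - 10 * (i : ℝ)) ^ 2 * (10 * (i : ℝ) + 0.3) ^ 2)
          * (r ^ (min p.1 p.2 + 1) * S ^ (α * S)) :=
        sum_le_sum fun i hi ↦ sum_le_sum fun p hp ↦ by
          simpa only [mul_assoc] using
            mul_le_mul_of_nonneg_left (hweight i hi p hp) (by positivity)
    _ = (∑ i ∈ Icc 1 n, 1 / ((10 * (n : ℝ) + 10.3 - 10 * (i : ℝ)) ^ 2 * (10 * (i : ℝ) + 0.3) ^ 2))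
          * (∑ p ∈ antidiagonal k, r ^ (min p.1 p.2 + 1)) * S ^ (α * S) := by
        simp only [← mul_sum, ← sum_mul, mul_assoc]
    _ ≤ 0.05 / (10 * (n : ℝ) + 10.3) ^ 2 * (2 * r / (1 - r)) * S ^ (α * S) := by
        gcongr
        · exact sum_Icc_one_div_sq_mul_sq_le n
        · exact sum_antidiagonal_pow_min_succ_le (by positivity) hr1 k
    _ = _ := by rw [hfour]; ring

/-- Corollary A.3: for `α > 1`, `k ≥ 1`, `n ≥ 0`,
`Σ_{i=1}^n Σ_{k₁+k₂=k} [1/((10n+10.3-10i)²(10i+0.3)²)] (k!/(k₁!k₂!))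
  (k₁+3(n+1-i))^(α(k₁+3(n+1-i))) (k₂+3i)^(α(k₂+3i))
  ≤ [0.05·4^(-(α-3/2))/(1-4^(-(α-1)))] (k+3(n+1))^(α(k+3(n+1))) / (10n+10.3)²`. -/
theorem corollary_A3 (α : ℝ) (hα : 1 < α) (k n : ℕ) (hk : 1 ≤ k) :
    ∑ i ∈ Finset.Icc 1 n, ∑ p ∈ Finset.HasAntidiagonal.antidiagonal k,
        (1 / ((10 * (n : ℝ) + 10.3 - 10 * (i : ℝ)) ^ 2 * (10 * (i : ℝ) + 0.3) ^ 2))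
          * ((k.factorial : ℝ) / (p.1.factorial * p.2.factorial))
          * ((p.1 : ℝ) + 3 * ((n : ℝ) + 1 - i)) ^ (α * ((p.1 : ℝ) + 3 * ((n : ℝ) + 1 - i)))
          * ((p.2 : ℝ) + 3 * i) ^ (α * ((p.2 : ℝ) + 3 * i))
      ≤ (0.05 * (4 : ℝ) ^ (-(α - 3 / 2)) / (1 - (4 : ℝ) ^ (-(α - 1))))
          * ((k : ℝ) + 3 * ((n : ℝ) + 1)) ^ (α * ((k : ℝ) + 3 * ((n : ℝ) + 1)))
          / (10 * (n : ℝ) + 10.3) ^ 2 :=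
  corollary_A3_general α hα k n
end
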